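/- arXiv:2010.06206 — 7 statements merged into one kernel-verified Lean document; each statement's English description precedes it below -/
import Mathlib

section
/- Let p be a prime, s ≥ 2, and H ∈ BH(n, p^s). Let Φ : ℤ_{p^s} → (ℤ_p)^{p^{s-1}} be the generalized Gray map, and let L(H^Φ) be the entrywise application of Φ to the vertically stacked matrix [L(H); L(H)+J; L(H)+2J; ...; L(H)+(p^{s-1}-1)J], where J is the all-ones matrix. Then the corresponding matrix H^Φ with entries ζ_p^{L(H^Φ)_{ij}} is a Butson Hadamard matrix BH(n·p^{s-1}, p). -/
/-- The `j`-th base-`p` digit of `x`, as an element of `ℤ_p`. -/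
def digitZ (p x j : ℕ) : ZMod p := ((x / p ^ j) % p : ℕ)

/-- Logarithmic form of the matrix `D = [ζ_p^{v·wᵀ}]_{v,w ∈ (ℤ_p)^{s-1}}`:
the entry in row `b` and column `w` (rows and columns indexed by
`0,…,p^{s-1}-1` via the base-`p` digit vectors) is the standard inner product
mod `p` of the digit vectors of `b` and `w`. -/
def LDrow (p s b w : ℕ) : ZMod p :=
  ∑ j ∈ Finset.range (s - 1), digitZ p b j * digitZ p w j

/-- The generalized Gray map `Φ : ℤ_{p^s} → (ℤ_p)^{p^{s-1}}`,
`Φ(a·p^{s-1} + b) = [L(D)]_b + a·𝟙`. -/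
def grayMap (p s : ℕ) (x : ZMod (p ^ s)) (i : Fin (p ^ (s - 1))) : ZMod p :=
  LDrow p s (x.val % p ^ (s - 1)) i.val + ((x.val / p ^ (s - 1) : ℕ) : ZMod p)

open Matrix

/-- A Butson Hadamard matrix `BH(card I, k)`. -/
def IsButson {I : Type*} [Fintype I] [DecidableEq I] (k : ℕ) (H : Matrix I I ℂ) : Prop :=
  (∀ i j : I, H i j ^ k = 1) ∧
    H * H.conjTranspose = (Fintype.card I : ℂ) • (1 : Matrix I I ℂ)

/-!
Write `e_N` for the standard additive character of `ℤ_N`. The linear part of the Gray map is the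
character table of `(ℤ_p)^{s-1}` read through base-`p` digits, so summing
`e_p(Φ(x)_t - Φ(y)_t)` over the Gray coordinate `t` gives `0` unless `x` and `y` have the same
low digits, i.e. `p^{s-1} ∣ x - y`, and `p^{s-1} e_{p^s}(x - y)` otherwise. Hence rows `(r, i)`
and `(r', i')` of `H^Φ` have inner product `p^{s-1} ∑_j [p^{s-1} ∣ z_j] e_{p^s}(z_j)` with
`z_j = L_ij + r - L_i'j - r'`. For `i = i'` this is `n p^{s-1} δ_{rr'}`. For `i ≠ i'`,
`∑_j e_{p^s}(z_j) = 0` by orthogonality of `H`; applying the Galois automorphisms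
`ζ ↦ ζ^{1 + cp}` and summing over `c` filters out exactly the terms with `p^{s-1} ∤ z_j`.
-/

open Finset ZMod

open Polynomial in
lemma IsPrimitiveRoot.sum_pow_eq_zero_of_sum_pow_eq_zero {K : Type*} [Field K] [CharZero K]
    {M : ℕ} (hM : 0 < M) {ζ ξ : K} (hζ : IsPrimitiveRoot ζ M) (hξ : IsPrimitiveRoot ξ M)
    {ι : Type*} (F : Finset ι) (g : ι → ℕ) (h : ∑ j ∈ F, ζ ^ g j = 0) :
    ∑ j ∈ F, ξ ^ g j = 0 := by
  let f : ℚ[X] := ∑ j ∈ F, X ^ g j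
  have hf : ∀ x : K, aeval x f = ∑ j ∈ F, x ^ g j := fun x => by simp [f]
  rw [← hf, ← minpoly.dvd_iff, ← cyclotomic_eq_minpoly_rat hξ hM,
    cyclotomic_eq_minpoly_rat hζ hM, minpoly.dvd_iff, hf, h]

namespace ZMod

variable {N : ℕ} [NeZero N]

lemma stdAddChar_mul_conj (a b : ZMod N) :
    stdAddChar a * starRingEnd ℂ (stdAddChar b) = stdAddChar (a - b) := by
  rw [sub_eq_add_neg, AddChar.map_add_eq_mul, AddChar.map_neg_eq_conj]

lemma stdAddChar_pow_eq_one (a : ZMod N) : stdAddChar a ^ N = 1 := by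
  rw [← AddChar.map_nsmul_eq_pow, nsmul_eq_mul, natCast_self, zero_mul, AddChar.map_zero_eq_one]

lemma stdAddChar_intCast_mul {a b : ℕ} (hN : N = a * b) [NeZero b] (k : ℤ) :
    stdAddChar ((k * a : ℤ) : ZMod N) = stdAddChar (k : ZMod b) := by
  have ha : (a : ℂ) ≠ 0 := by
    have := NeZero.ne N
    rw [hN] at this
    exact_mod_cast left_ne_zero_of_mul this
  rw [stdAddChar_coe, stdAddChar_coe, hN]
  congr 1
  push_cast
  field_simp

lemma sum_stdAddChar_dotProduct {ι : Type*} [Fintype ι] [DecidableEq ι] (c : ι → ZMod N) :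
    ∑ v : ι → ZMod N, stdAddChar (c ⬝ᵥ v) = if c = 0 then (N : ℂ) ^ Fintype.card ι else 0 := by
  let ψ : AddChar (ι → ZMod N) ℂ :=
    stdAddChar.compAddMonoidHom (AddMonoidHom.mk' (c ⬝ᵥ ·) (dotProduct_add c))
  have hψ : ψ = 0 ↔ c = 0 := by
    refine ⟨fun h => funext fun k => ?_, fun h => ?_⟩
    · have hk := DFunLike.congr_fun h (Pi.single k 1)
      simp only [ψ, AddChar.zero_apply, AddChar.compAddMonoidHom_apply, AddMonoidHom.mk'_apply,
        dotProduct_single, mul_one] at hk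
      rwa [← AddChar.map_zero_eq_one (stdAddChar (N := N)), injective_stdAddChar.eq_iff] at hk
    · ext v
      simp [ψ, h]
  have := AddChar.sum_eq_ite ψ
  simp only [hψ] at this
  simpa [ψ, ZMod.card] using this

lemma stdAddChar_eq_pow_val (a : ZMod N) : stdAddChar a = stdAddChar (1 : ZMod N) ^ a.val := by
  rw [← AddChar.map_nsmul_eq_pow, nsmul_one, natCast_zmod_val]

lemma isPrimitiveRoot_stdAddChar_one : IsPrimitiveRoot (stdAddChar (1 : ZMod N)) N := by
  have := Complex.isPrimitiveRoot_exp N (NeZero.ne N)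
  rwa [← Int.cast_one, stdAddChar_coe, Int.cast_one, mul_one]

lemma sum_stdAddChar_unit_mul_eq_zero {ι : Type*} (F : Finset ι) (z : ι → ZMod N)
    (h : ∑ j ∈ F, stdAddChar (z j) = 0) {u : ZMod N} (hu : IsUnit u) :
    ∑ j ∈ F, stdAddChar (u * z j) = 0 := by
  obtain ⟨u, rfl⟩ := hu
  have hζ := isPrimitiveRoot_stdAddChar_one (N := N)
  have hmul : ∀ w : ZMod N, stdAddChar ((u : ZMod N) * w) = stdAddChar (u : ZMod N) ^ w.val :=
    fun w => by rw [← AddChar.map_nsmul_eq_pow, nsmul_eq_mul, natCast_zmod_val, mul_comm]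
  simp_rw [stdAddChar_eq_pow_val (z _)] at h
  simp_rw [hmul, stdAddChar_eq_pow_val (u : ZMod N)]
  exact hζ.sum_pow_eq_zero_of_sum_pow_eq_zero (Nat.pos_of_neZero N)
    (hζ.pow_of_coprime _ (val_coe_unit_coprime u)) F _ h

/-- Summing the vanishing sum over its Galois conjugates by the units `1 + c * a` keeps exactly
the terms with `a * z j = 0`. -/
lemma sum_ite_stdAddChar_eq_zero {a : ZMod N} (ha : IsNilpotent a) {ι : Type*} (F : Finset ι)
    (z : ι → ZMod N) (h : ∑ j ∈ F, stdAddChar (z j) = 0) :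
    ∑ j ∈ F, (if a * z j = 0 then stdAddChar (z j) else 0) = 0 := by
  have hunit : ∀ c : ZMod N, IsUnit (1 + c * a) := fun c =>
    ((Commute.all c a).isNilpotent_mul_left ha).isUnit_one_add
  have hshift : ∀ w : ZMod N, ∑ c : ZMod N, stdAddChar ((1 + c * a) * w)
      = N * if a * w = 0 then stdAddChar w else 0 := fun w => by
    simp_rw [add_mul, one_mul, mul_assoc, AddChar.map_add_eq_mul, ← mul_sum,
      AddChar.sum_mulShift _ (isPrimitive_stdAddChar N), ZMod.card]
    split_ifs <;> ring
  have hzero : ∑ c : ZMod N, ∑ j ∈ F, stdAddChar ((1 + c * a) * z j) = 0 :=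
    Finset.sum_eq_zero fun c _ => sum_stdAddChar_unit_mul_eq_zero F z h (hunit c)
  rw [Finset.sum_comm] at hzero
  simp_rw [hshift, ← mul_sum] at hzero
  exact (mul_eq_zero.1 hzero).resolve_left (Nat.cast_ne_zero.2 (NeZero.ne N))

lemma dvd_val_sub_iff {N P : ℕ} [NeZero N] (hPN : P ∣ N) (x y : ZMod N) :
    P ∣ (x - y).val ↔ x.val % P = y.val % P := by
  rw [← natCast_eq_zero_iff, natCast_val, cast_sub hPN, sub_eq_zero, ← natCast_val,
    ← natCast_val, natCast_eq_natCast_iff']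

lemma natCast_mul_eq_zero_iff_dvd_val {N a b : ℕ} [NeZero N] (hN : N = a * b) (z : ZMod N) :
    (a : ZMod N) * z = 0 ↔ b ∣ z.val := by
  have ha : 0 < a := Nat.pos_of_ne_zero (left_ne_zero_of_mul (hN ▸ NeZero.ne N))
  rw [← natCast_zmod_val z, ← Nat.cast_mul, natCast_eq_zero_iff, natCast_zmod_val,
    show N ∣ a * z.val ↔ a * b ∣ a * z.val by rw [← hN], Nat.mul_dvd_mul_iff_left ha]

end ZMod

def digitsEquiv (p m : ℕ) [NeZero p] : Fin (p ^ m) ≃ (Fin m → ZMod p) :=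
  finFunctionFinEquiv.symm.trans (Equiv.piCongrRight fun _ => (ZMod.finEquiv p).toEquiv)

lemma digitsEquiv_apply {p : ℕ} [NeZero p] (m : ℕ) (t : Fin (p ^ m)) (k : Fin m) :
    digitsEquiv p m t k = digitZ p t k := by
  obtain ⟨q, rfl⟩ : ∃ q, p = q + 1 := Nat.exists_eq_succ_of_ne_zero (NeZero.ne p)
  simp only [digitsEquiv, digitZ, finEquiv, Equiv.trans_apply, Equiv.piCongrRight_apply]
  rw [← finFunctionFinEquiv_symm_apply_val]
  exact (natCast_zmod_val _).symm

section GrayMap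

variable {p s : ℕ} [NeZero p]

lemma grayMap_eq_dotProduct (x : ZMod (p ^ s)) (t : Fin (p ^ (s - 1))) :
    grayMap p s x t =
      digitsEquiv p (s - 1) ⟨x.val % p ^ (s - 1), Nat.mod_lt _ (Nat.pos_of_neZero _)⟩ ⬝ᵥ
        digitsEquiv p (s - 1) t + ((x.val / p ^ (s - 1) : ℕ) : ZMod p) := by
  simp only [grayMap, LDrow, dotProduct, digitsEquiv_apply]
  rw [Fin.sum_univ_eq_sum_range (fun k => digitZ p (x.val % p ^ (s - 1)) k * digitZ p t k)]

theorem sum_grayMap_mul_conj (hs : s ≠ 0) (x y : ZMod (p ^ s)) :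
    ∑ t, stdAddChar (grayMap p s x t) * starRingEnd ℂ (stdAddChar (grayMap p s y t))
      = if p ^ (s - 1) ∣ (x - y).val then (p : ℂ) ^ (s - 1) * stdAddChar (x - y) else 0 := by
  set P := p ^ (s - 1)
  have hM : p ^ s = P * p := (pow_sub_one_mul hs p).symm
  have hP : 0 < P := Nat.pos_of_neZero P
  set xLow : Fin P := ⟨x.val % P, Nat.mod_lt _ hP⟩
  set yLow : Fin P := ⟨y.val % P, Nat.mod_lt _ hP⟩
  set c := digitsEquiv p (s - 1) xLow - digitsEquiv p (s - 1) yLow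
  have hc : c = 0 ↔ P ∣ (x - y).val := by
    rw [sub_eq_zero, Equiv.apply_eq_iff_eq, Fin.ext_iff, dvd_val_sub_iff ⟨p, hM⟩]
  simp_rw [stdAddChar_mul_conj, grayMap_eq_dotProduct, add_sub_add_comm, ← sub_dotProduct,
    AddChar.map_add_eq_mul, ← sum_mul]
  rw [(digitsEquiv p (s - 1)).sum_comp (fun v => stdAddChar (c ⬝ᵥ v)), sum_stdAddChar_dotProduct,
    Fintype.card_fin]
  by_cases h : P ∣ (x - y).val
  · rw [if_pos (hc.2 h), if_pos h]
    congr 1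
    have hb : x.val % P = y.val % P := (dvd_val_sub_iff ⟨p, hM⟩ x y).1 h
    have hxy : x - y = ((((x.val / P : ℕ) : ℤ) - (y.val / P : ℕ)) * P : ℤ) := by
      have hx : x = ((P * (x.val / P) + x.val % P : ℕ) : ZMod (p ^ s)) := by
        rw [Nat.div_add_mod, natCast_zmod_val]
      have hy : y = ((P * (y.val / P) + y.val % P : ℕ) : ZMod (p ^ s)) := by
        rw [Nat.div_add_mod, natCast_zmod_val]
      conv_lhs => rw [hx, hy, hb]
      simp only [Nat.cast_add, Nat.cast_mul, Int.cast_mul, Int.cast_sub, Int.cast_natCast]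
      ring
    rw [hxy, stdAddChar_intCast_mul hM, Int.cast_sub, Int.cast_natCast, Int.cast_natCast]
  · rw [if_neg (mt hc.1 h), if_neg h, zero_mul]

end GrayMap

section GrayImage

variable {ι : Type*} [Fintype ι] {p s : ℕ} [NeZero p]

noncomputable def grayImage (p s : ℕ) [NeZero p] (L : Matrix ι ι (ZMod (p ^ s))) :
    Matrix (Fin (p ^ (s - 1)) × ι) (Fin (p ^ (s - 1)) × ι) ℂ :=
  Matrix.of fun ri tj =>
    stdAddChar (grayMap p s (L ri.2 tj.2 + ((ri.1.val : ℕ) : ZMod (p ^ s))) tj.1)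

lemma sum_grayMap_mul_conj_prod (hs : s ≠ 0) (x y : ι → ZMod (p ^ s)) :
    ∑ tj : Fin (p ^ (s - 1)) × ι,
        stdAddChar (grayMap p s (x tj.2) tj.1) *
          starRingEnd ℂ (stdAddChar (grayMap p s (y tj.2) tj.1))
      = (p : ℂ) ^ (s - 1) *
          ∑ j, if p ^ (s - 1) ∣ (x j - y j).val then stdAddChar (x j - y j) else 0 := by
  rw [Fintype.sum_prod_type, sum_comm, mul_sum]
  refine sum_congr rfl fun j _ => ?_
  exact (sum_grayMap_mul_conj hs (x j) (y j)).trans (by rw [mul_ite, mul_zero])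

theorem isButson_grayImage [DecidableEq ι] (hs : s ≠ 0) (L : Matrix ι ι (ZMod (p ^ s)))
    (hL : ∀ i i', i ≠ i' → ∑ j, stdAddChar (L i j - L i' j) = 0) :
    IsButson p (grayImage p s L) := by
  have hM : p ^ s = p ^ (s - 1) * p := (pow_sub_one_mul hs p).symm
  refine ⟨fun _ _ => stdAddChar_pow_eq_one _, ?_⟩
  ext ⟨r, i⟩ ⟨r', i'⟩
  simp only [mul_apply, conjTranspose_apply, RCLike.star_def, grayImage, of_apply]
  refine (sum_grayMap_mul_conj_prod hs (fun j => L i j + ((r.val : ℕ) : ZMod (p ^ s)))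
    (fun j => L i' j + ((r'.val : ℕ) : ZMod (p ^ s)))).trans ?_
  simp only [Matrix.smul_apply, one_apply, Prod.mk.injEq]
  obtain rfl | hi := eq_or_ne i i'
  · have hr : p ^ (s - 1) ∣ (((r.val : ℕ) : ZMod (p ^ s)) - (r'.val : ℕ)).val ↔ r = r' := by
      have hle : p ^ (s - 1) ≤ p ^ s := hM ▸ Nat.le_mul_of_pos_right _ (Nat.pos_of_neZero p)
      rw [dvd_val_sub_iff ⟨p, hM⟩, val_cast_of_lt (r.isLt.trans_le hle),
        val_cast_of_lt (r'.isLt.trans_le hle), Nat.mod_eq_of_lt r.isLt, Nat.mod_eq_of_lt r'.isLt,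
        Fin.val_inj]
    simp only [add_sub_add_left_eq_sub, hr, and_true, sum_const, card_univ, Fintype.card_prod,
      Fintype.card_fin]
    split_ifs with h
    · subst h
      simp only [sub_self, AddChar.map_zero_eq_one, nsmul_eq_mul, mul_one]
      push_cast
      ring
    · simp
  · have hz : ∑ j, stdAddChar (L i j + ((r.val : ℕ) : ZMod (p ^ s)) -
        (L i' j + ((r'.val : ℕ) : ZMod (p ^ s)))) = 0 := by
      simp_rw [add_sub_add_comm, AddChar.map_add_eq_mul, ← sum_mul, hL i i' hi, zero_mul]
    have hp : IsNilpotent (p : ZMod (p ^ s)) := ⟨s, by rw [← Nat.cast_pow, natCast_self]⟩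
    simp only [← natCast_mul_eq_zero_iff_dvd_val (hM.trans (mul_comm _ _)),
      sum_ite_stdAddChar_eq_zero hp _ _ hz, mul_zero, hi, and_false, if_false, smul_zero]

end GrayImage

/-- If `H ∈ BH(n, p^s)` and `L(H^Φ)` is the entrywise application of the
generalized Gray map `Φ` to the stacked matrix
`[L(H); L(H)+J; …; L(H)+(p^{s-1}-1)J]`, then the corresponding matrix
`H^Φ = [ζ_p^{L(H^Φ)}]` is a Butson Hadamard matrix `BH(n·p^{s-1}, p)`.
Rows are indexed by pairs `(r,i)` (block `r`, original row `i`) and columns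
by pairs `(t,j)` (original column `j`, Gray coordinate `t`). -/
theorem gray_image_butson (p s n : ℕ) [Fact p.Prime] (hs : 2 ≤ s)
    (L : Matrix (Fin n) (Fin n) (ZMod (p ^ s)))
    (H : Matrix (Fin n) (Fin n) ℂ)
    (hH : ∀ i j, H i j = Complex.exp (2 * Real.pi * Complex.I * (L i j).val / (p ^ s)))
    (hBH : IsButson (p ^ s) H)
    (Hphi : Matrix (Fin (p ^ (s - 1)) × Fin n) (Fin (p ^ (s - 1)) × Fin n) ℂ)
    (hHphi : ∀ (r t : Fin (p ^ (s - 1))) (i j : Fin n),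
      Hphi (r, i) (t, j) = Complex.exp (2 * Real.pi * Complex.I *
        (grayMap p s (L i j + ((r.val : ℕ) : ZMod (p ^ s))) t).val / p)) :
    IsButson p Hphi := by
  have hH' : ∀ i j, H i j = stdAddChar (L i j) := fun i j => by
    rw [hH, stdAddChar_apply, toCircle_apply, Nat.cast_pow]
  have hHphi' : Hphi = grayImage p s L := by
    ext ⟨r, i⟩ ⟨t, j⟩
    rw [hHphi, grayImage, of_apply, stdAddChar_apply, toCircle_apply]
  refine hHphi' ▸ isButson_grayImage (by omega) L fun i i' hi => ?_
  have hrow := congrFun (congrFun hBH.2 i) i'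
  simpa [mul_apply, hH', stdAddChar_mul_conj, one_apply_ne hi] using hrow
end

section
/- Let k = m·p^s with p prime not dividing m, s ≥ 2, and let ω be a primitive k-th root of unity. If z ∈ ℤ_k is not of the form f·p^{s-1} for any 0 ≤ f ≤ mp−1, then ∑_{i=1}^{p^{s-1}} ω^{Ψ_p(z)_i} = 0 (where exponents Ψ_p(z)_i ∈ ℤ_{mp} are interpreted via the embedding ζ_{mp} = ω^{p^{s-1}}). If z = f·p^{s-1}, then Ψ_p(z) = f·𝟙 and the sum equals p^{s-1}·ω^{f·p^{s-1}}. -/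
section PsiAux

open Finset

lemma pow_natMod (η : ℂ) {p : ℕ} (h : η ^ p = 1) (n : ℕ) : η ^ (n % p) = η ^ n := by
  conv_rhs => rw [← Nat.div_add_mod n p]
  rw [pow_add, pow_mul, h, one_pow, one_mul]

lemma pow_val_add (η : ℂ) {p : ℕ} [NeZero p] (h : η ^ p = 1) (x y : ZMod p) :
    η ^ (x + y).val = η ^ x.val * η ^ y.val := by
  rw [ZMod.val_add, pow_natMod η h, pow_add]

lemma pow_val_sum (η : ℂ) {p : ℕ} [NeZero p] (h : η ^ p = 1) {α : Type*} (S : Finset α)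
    (g : α → ZMod p) : η ^ (∑ j ∈ S, g j).val = ∏ j ∈ S, η ^ (g j).val := by
  classical
  induction S using Finset.cons_induction with
  | empty => simp
  | cons a S ha ih => rw [Finset.sum_cons, Finset.prod_cons, pow_val_add η h, ih]

def zmodFinEquiv (p : ℕ) [NeZero p] : Fin p ≃ ZMod p where
  toFun d := ((d : ℕ) : ZMod p)
  invFun x := ⟨x.val, ZMod.val_lt x⟩
  left_inv d := by ext; simp [ZMod.val_cast_of_lt d.isLt]
  right_inv x := by simp [ZMod.natCast_val, ZMod.cast_id]

lemma zmod_val_sum_eq_range {p : ℕ} [NeZero p] (f : ℕ → ℂ) :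
    ∑ x : ZMod p, f x.val = ∑ j ∈ Finset.range p, f j := by
  rw [← Equiv.sum_comp (zmodFinEquiv p) (fun x : ZMod p => f x.val),
    ← Fin.sum_univ_eq_sum_range f p]
  refine Finset.sum_congr rfl fun d _ => ?_
  simp [zmodFinEquiv, ZMod.val_cast_of_lt d.isLt]

lemma char_sum {p : ℕ} (hp : p.Prime) {η : ℂ} (hη : IsPrimitiveRoot η p) (c : ZMod p) :
    ∑ d : Fin p, η ^ (c * ((d : ℕ) : ZMod p)).val = if c = 0 then (p : ℂ) else 0 := by
  haveI : Fact p.Prime := ⟨hp⟩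
  have hcomp := Equiv.sum_comp (zmodFinEquiv p) (fun x : ZMod p => η ^ (c * x).val)
  simp only [zmodFinEquiv, Equiv.coe_fn_mk] at hcomp
  rw [hcomp]
  split_ifs with hc
  · simp [hc, ZMod.card]
  · have h1 : ∑ x : ZMod p, η ^ (c * x).val = ∑ x : ZMod p, η ^ x.val :=
      Equiv.sum_comp (Equiv.mulLeft₀ c hc) (fun x : ZMod p => η ^ x.val)
    rw [h1, zmod_val_sum_eq_range (fun n => η ^ n)]
    exact hη.geom_sum_eq_zero hp.one_lt

lemma digit_zero (p j : ℕ) : digitZ p 0 j = 0 := by simp [digitZ]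

lemma sum_LDrow {p : ℕ} (hp : p.Prime) (s : ℕ) {η : ℂ} (hη : IsPrimitiveRoot η p)
    (b : ℕ) (hb : b < p ^ (s - 1)) :
    ∑ i : Fin (p ^ (s - 1)), η ^ (LDrow p s b i.val).val =
      if b = 0 then ((p : ℂ) ^ (s - 1)) else 0 := by
  haveI : NeZero p := ⟨hp.pos.ne'⟩
  have h1 : η ^ p = 1 := hη.pow_eq_one
  set t := s - 1 with ht
  -- digits of (e w)
  have hdig : ∀ (w : Fin t → Fin p) (j : Fin t),
      digitZ p (finFunctionFinEquiv w).val j.val = (((w j : ℕ)) : ZMod p) := by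
    intro w j
    have : ((finFunctionFinEquiv.symm (finFunctionFinEquiv w) j : ℕ)) =
        (finFunctionFinEquiv w : ℕ) / p ^ (j : ℕ) % p := rfl
    rw [Equiv.symm_apply_apply] at this
    rw [digitZ, ← this]
  rw [← Equiv.sum_comp (finFunctionFinEquiv : (Fin t → Fin p) ≃ Fin (p ^ t))
    (fun i : Fin (p ^ t) => η ^ (LDrow p s b i.val).val)]
  have hrow : ∀ w : Fin t → Fin p,
      LDrow p s b (finFunctionFinEquiv w).val =
        ∑ j : Fin t, digitZ p b j.val * (((w j : ℕ)) : ZMod p) := by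
    intro w
    rw [LDrow, ← ht, ← Fin.sum_univ_eq_sum_range
      (fun j => digitZ p b j * digitZ p (finFunctionFinEquiv w).val j) t]
    exact Finset.sum_congr rfl fun j _ => by rw [hdig w j]
  calc ∑ w : Fin t → Fin p, η ^ (LDrow p s b (finFunctionFinEquiv w)).val
      = ∑ w : Fin t → Fin p, ∏ j : Fin t,
          η ^ (digitZ p b j.val * (((w j : ℕ)) : ZMod p)).val := by
        refine Finset.sum_congr rfl fun w _ => ?_
        rw [hrow w, pow_val_sum η h1]
    _ = ∏ j : Fin t, ∑ d : Fin p, η ^ (digitZ p b j.val * ((d : ℕ) : ZMod p)).val := by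
        rw [Finset.prod_univ_sum]
        rw [Fintype.piFinset_univ]
    _ = ∏ j : Fin t, if digitZ p b j.val = 0 then (p : ℂ) else 0 := by
        exact Finset.prod_congr rfl fun j _ => char_sum hp hη _
    _ = if b = 0 then ((p : ℂ) ^ t) else 0 := by
        by_cases hb0 : b = 0
        · simp [hb0, digit_zero]
        · rw [if_neg hb0]
          -- some digit is nonzero
          have : ¬ ∀ j : Fin t, digitZ p b j.val = 0 := by
            intro hall
            apply hb0
            -- b's digit vector is zero, so b = 0
            have he : finFunctionFinEquiv.symm (⟨b, hb⟩ : Fin (p ^ t)) = fun _ => (0 : Fin p) := by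
              funext j
              have hv : ((finFunctionFinEquiv.symm (⟨b, hb⟩ : Fin (p ^ t)) j : ℕ)) =
                  b / p ^ (j : ℕ) % p := rfl
              have := hall j
              rw [digitZ] at this
              have hlt : b / p ^ (j : ℕ) % p < p := Nat.mod_lt _ hp.pos
              have : b / p ^ (j : ℕ) % p = 0 :=
                Nat.eq_zero_of_dvd_of_lt ((ZMod.natCast_eq_zero_iff _ _).mp this) hlt
              ext
              rw [hv, this]
              rfl
            have : (⟨b, hb⟩ : Fin (p ^ t)) = finFunctionFinEquiv (fun _ => (0 : Fin p)) := by
              rw [← he, Equiv.apply_symm_apply]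
            have hbv : b = (finFunctionFinEquiv (fun _ : Fin t => (0 : Fin p)) : ℕ) :=
              congrArg Fin.val this
            rw [hbv, finFunctionFinEquiv_apply]
            simp
          push_neg at this
          obtain ⟨j0, hj0⟩ := this
          exact Finset.prod_eq_zero (Finset.mem_univ j0) (by rw [if_neg hj0])

lemma crt_decomp {u v : ℕ} (hu : 0 < u) (hv : 0 < v) (hco : Nat.Coprime u v)
    (z : ZMod (u * v)) :
    ∃ a b : ℕ, a < u ∧ b < v ∧ z = ((a * v + b * u : ℕ) : ZMod (u * v)) := by
  haveI : NeZero (u * v) := ⟨(Nat.mul_pos hu hv).ne'⟩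
  haveI : NeZero u := ⟨hu.ne'⟩
  haveI : NeZero v := ⟨hv.ne'⟩
  set g : Fin u × Fin v → ZMod (u * v) :=
    fun x => (((x.1 : ℕ) * v + (x.2 : ℕ) * u : ℕ) : ZMod (u * v)) with hg
  have hinj : Function.Injective g := by
    rintro ⟨a₁, b₁⟩ ⟨a₂, b₂⟩ h
    simp only [hg] at h
    have hme : (a₁ : ℕ) * v + (b₁ : ℕ) * u ≡ (a₂ : ℕ) * v + (b₂ : ℕ) * u [MOD u * v] :=
      (ZMod.natCast_eq_natCast_iff _ _ _).mp h
    have h1 : ((a₁ : ℕ) * v + (b₁ : ℕ) * u : ℕ) ≡ (a₂ : ℕ) * v + (b₂ : ℕ) * u [MOD u] :=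
      hme.of_dvd (dvd_mul_right u v)
    have h2 : ((a₁ : ℕ) * v + (b₁ : ℕ) * u : ℕ) ≡ (a₂ : ℕ) * v + (b₂ : ℕ) * u [MOD v] :=
      hme.of_dvd (dvd_mul_left v u)
    have e1 : ((a₁ : ℕ) : ZMod u) * v = ((a₂ : ℕ) : ZMod u) * v := by
      have := (ZMod.natCast_eq_natCast_iff _ _ _).mpr h1
      push_cast at this
      simpa [ZMod.natCast_self] using this
    have e2 : ((b₁ : ℕ) : ZMod v) * u = ((b₂ : ℕ) : ZMod v) * u := by
      have := (ZMod.natCast_eq_natCast_iff _ _ _).mpr h2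
      push_cast at this
      simpa [ZMod.natCast_self] using this
    have hv1 : IsUnit ((v : ℕ) : ZMod u) := (ZMod.isUnit_iff_coprime v u).mpr hco.symm
    have hu1 : IsUnit ((u : ℕ) : ZMod v) := (ZMod.isUnit_iff_coprime u v).mpr hco
    have ea : ((a₁ : ℕ) : ZMod u) = ((a₂ : ℕ) : ZMod u) := by
      rw [mul_comm, mul_comm ((a₂ : ℕ) : ZMod u)] at e1
      exact hv1.mul_left_cancel e1
    have eb : ((b₁ : ℕ) : ZMod v) = ((b₂ : ℕ) : ZMod v) := by
      rw [mul_comm, mul_comm ((b₂ : ℕ) : ZMod v)] at e2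
      exact hu1.mul_left_cancel e2
    have : (a₁ : ℕ) = a₂ := by
      have := congrArg ZMod.val ea
      rwa [ZMod.val_cast_of_lt a₁.isLt, ZMod.val_cast_of_lt a₂.isLt] at this
    have hbeq : (b₁ : ℕ) = b₂ := by
      have := congrArg ZMod.val eb
      rwa [ZMod.val_cast_of_lt b₁.isLt, ZMod.val_cast_of_lt b₂.isLt] at this
    ext <;> simp_all
  have hsurj : Function.Surjective g := by
    have hcard : Fintype.card (Fin u × Fin v) = Fintype.card (ZMod (u * v)) := by
      simp [ZMod.card]
    exact (Fintype.bijective_iff_injective_and_card g).mpr ⟨hinj, hcard⟩ |>.2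
  obtain ⟨⟨a, b⟩, hab⟩ := hsurj z
  exact ⟨a, b, a.isLt, b.isLt, hab.symm⟩

end PsiAux

/-- Let `k = m·p^s` (`p` prime, `p ∤ m`) and `ω` a primitive `k`-th root of
unity, so that `ζ_{mp} = ω^{p^{s-1}}`.  If `z ∈ ℤ_k` is not of the form
`f·p^{s-1}`, then `∑_{i} ω^{Ψ(z)_i·p^{s-1}} = 0`; and if `z = f·p^{s-1}`
(`0 ≤ f ≤ mp−1`), then `Ψ(z) = f·𝟙` and the sum equals
`p^{s-1}·ω^{f·p^{s-1}}`. -/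
theorem psi_root_sums (p s m : ℕ) (hp : p.Prime) (hs : 2 ≤ s) (hm : 0 < m)
    (hpm : ¬ p ∣ m)
    (Psi : ZMod (m * p ^ s) → Fin (p ^ (s - 1)) → ZMod (m * p))
    (hPsi : ∀ a b : ℕ, a < m → b < p ^ s → ∀ i,
      Psi ((a * p ^ s + b * m : ℕ) : ZMod (m * p ^ s)) i =
        ((m * (grayMap p s ((b : ℕ) : ZMod (p ^ s)) i).val + a * p : ℕ) : ZMod (m * p)))
    (ω : ℂ) (hω : IsPrimitiveRoot ω (m * p ^ s)) (z : ZMod (m * p ^ s)) :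
    ((¬ ∃ f : ℕ, f < m * p ∧ z = ((f * p ^ (s - 1) : ℕ) : ZMod (m * p ^ s))) →
      ∑ i : Fin (p ^ (s - 1)), ω ^ ((Psi z i).val * p ^ (s - 1)) = 0) ∧
    (∀ f : ℕ, f < m * p → z = ((f * p ^ (s - 1) : ℕ) : ZMod (m * p ^ s)) →
      (∀ i, Psi z i = ((f : ℕ) : ZMod (m * p))) ∧
      ∑ i : Fin (p ^ (s - 1)), ω ^ ((Psi z i).val * p ^ (s - 1)) =
        (p : ℂ) ^ (s - 1) * ω ^ (f * p ^ (s - 1))) := by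
  haveI : NeZero p := ⟨hp.pos.ne'⟩
  have hps : 0 < p ^ s := pow_pos hp.pos s
  have hmppos : 0 < m * p := Nat.mul_pos hm hp.pos
  haveI : NeZero (m * p) := ⟨hmppos.ne'⟩
  haveI : NeZero (m * p ^ s) := ⟨(Nat.mul_pos hm hps).ne'⟩
  haveI : NeZero (p ^ s) := ⟨hps.ne'⟩
  have hts : (s - 1) + 1 = s := Nat.succ_pred_eq_of_pos (show 0 < s by omega)
  have hpt : p ^ (s - 1) * p = p ^ s := by rw [← pow_succ, hts]
  have hcopm : Nat.Coprime p m := (Nat.Prime.coprime_iff_not_dvd hp).mpr hpm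
  have hco : Nat.Coprime m (p ^ s) := Nat.Coprime.pow_right s hcopm.symm
  obtain ⟨a, b, ha, hb, hz⟩ := crt_decomp hm hps hco z
  set ζ : ℂ := ω ^ (p ^ (s - 1)) with hζ
  set η : ℂ := ζ ^ m with hη
  have hηω : η = ω ^ (p ^ (s - 1) * m) := by rw [hη, hζ, ← pow_mul]
  have hηprim : IsPrimitiveRoot η p := by
    rw [hηω]
    exact hω.pow (Nat.mul_pos hm hps) (by rw [← hpt]; ring)
  have hζmp : ζ ^ (m * p) = 1 := by
    rw [hζ, ← pow_mul]
    have h5 : p ^ (s - 1) * (m * p) = m * p ^ s := by rw [← hpt]; ring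
    rw [h5, hω.pow_eq_one]
  have hη1 : η ^ p = 1 := hηprim.pow_eq_one
  have hvalb : ((b : ℕ) : ZMod (p ^ s)).val = b := ZMod.val_cast_of_lt hb
  have hcast : ∀ n : ℕ, ω ^ (((n : ℕ) : ZMod (m * p)).val * p ^ (s - 1)) = ζ ^ n := by
    intro n
    rw [ZMod.val_natCast, mul_comm (n % (m * p)) (p ^ (s - 1)), pow_mul]
    exact pow_natMod ζ hζmp n
  have hterm : ∀ i : Fin (p ^ (s - 1)), ω ^ ((Psi z i).val * p ^ (s - 1)) =
      ζ ^ (a * p) * η ^ (((b / p ^ (s - 1) : ℕ) : ZMod p)).val *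
        η ^ (LDrow p s (b % p ^ (s - 1)) i.val).val := by
    intro i
    rw [hz, hPsi a b ha hb i, hcast, pow_add, pow_mul]
    have hg : grayMap p s ((b : ℕ) : ZMod (p ^ s)) i =
        LDrow p s (b % p ^ (s - 1)) i.val + ((b / p ^ (s - 1) : ℕ) : ZMod p) := by
      simp only [grayMap, hvalb]
    rw [hg, pow_val_add η hη1]
    ring
  have hsum : ∑ i : Fin (p ^ (s - 1)), ω ^ ((Psi z i).val * p ^ (s - 1)) =
      ζ ^ (a * p) * η ^ (((b / p ^ (s - 1) : ℕ) : ZMod p)).val *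
        (if b % p ^ (s - 1) = 0 then ((p : ℂ) ^ (s - 1)) else 0) := by
    rw [Finset.sum_congr rfl fun i _ => hterm i, ← Finset.mul_sum,
      sum_LDrow hp s hηprim _ (Nat.mod_lt _ (pow_pos hp.pos _))]
  constructor
  · intro hne
    have hb0 : b % p ^ (s - 1) ≠ 0 := by
      intro h0
      apply hne
      obtain ⟨c, hc⟩ := Nat.dvd_of_mod_eq_zero h0
      refine ⟨(a * p + c * m) % (m * p), Nat.mod_lt _ hmppos, ?_⟩
      rw [hz, ZMod.natCast_eq_natCast_iff]
      have h1 : (a * p + c * m) % (m * p) * p ^ (s - 1) ≡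
          (a * p + c * m) * p ^ (s - 1) [MOD (m * p) * p ^ (s - 1)] :=
        Nat.ModEq.mul_right' _ (Nat.mod_modEq _ _)
      have h2 : (m * p) * p ^ (s - 1) = m * p ^ s := by rw [← hpt]; ring
      have h3 : (a * p + c * m) * p ^ (s - 1) = a * p ^ s + b * m := by
        rw [hc, ← hpt]; ring
      rw [h2, h3] at h1
      exact h1.symm
    rw [hsum, if_neg hb0, mul_zero]
  · intro f hf hzf
    have hme : a * p ^ s + b * m ≡ f * p ^ (s - 1) [MOD m * p ^ s] :=
      (ZMod.natCast_eq_natCast_iff _ _ _).mp (hz.symm.trans hzf)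
    have hdvd : p ^ (s - 1) ∣ b := by
      have hd1 : a * p ^ s + b * m ≡ f * p ^ (s - 1) [MOD p ^ (s - 1)] :=
        hme.of_dvd ⟨m * p, by rw [← hpt]; ring⟩
      have hz1 : f * p ^ (s - 1) ≡ 0 [MOD p ^ (s - 1)] :=
        Nat.modEq_zero_iff_dvd.mpr ⟨f, mul_comm _ _⟩
      have hz2 : a * p ^ s ≡ 0 [MOD p ^ (s - 1)] :=
        Nat.modEq_zero_iff_dvd.mpr ⟨a * p, by rw [← hpt]; ring⟩
      have hbm : b * m ≡ 0 [MOD p ^ (s - 1)] := by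
        have h4 : a * p ^ s + b * m ≡ 0 + 0 [MOD p ^ (s - 1)] := by
          simpa using hd1.trans hz1
        exact Nat.ModEq.add_left_cancel hz2 h4
      exact (hcopm.pow_left _).dvd_of_dvd_mul_right (Nat.modEq_zero_iff_dvd.mp hbm)
    obtain ⟨c, hc⟩ := hdvd
    have hcp : c < p := by
      rcases Nat.lt_or_ge c p with h | h
      · exact h
      · exfalso
        have : p ^ s ≤ b := by
          calc p ^ s = p ^ (s - 1) * p := hpt.symm
          _ ≤ p ^ (s - 1) * c := Nat.mul_le_mul_left _ h
          _ = b := hc.symm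
        omega
    have hmod0 : b % p ^ (s - 1) = 0 := by rw [hc]; exact Nat.mul_mod_right _ _
    have hdivc : b / p ^ (s - 1) = c := by
      rw [hc]; exact Nat.mul_div_cancel_left _ (pow_pos hp.pos _)
    have hPsieq : ∀ i, Psi z i = ((f : ℕ) : ZMod (m * p)) := by
      intro i
      rw [hz, hPsi a b ha hb i]
      have hgr : grayMap p s ((b : ℕ) : ZMod (p ^ s)) i = ((c : ℕ) : ZMod p) := by
        simp only [grayMap, hvalb, hmod0, hdivc]
        have hL : LDrow p s 0 i.val = 0 := by simp [LDrow, digit_zero]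
        rw [hL, zero_add]
      rw [hgr, ZMod.val_cast_of_lt hcp, ZMod.natCast_eq_natCast_iff]
      apply Nat.ModEq.mul_right_cancel' (c := p ^ (s - 1)) (pow_pos hp.pos _).ne'
      have hl : (m * c + a * p) * p ^ (s - 1) = a * p ^ s + b * m := by rw [hc, ← hpt]; ring
      have hmm : (m * p) * p ^ (s - 1) = m * p ^ s := by rw [← hpt]; ring
      rw [hl, hmm]
      exact hme
    refine ⟨hPsieq, ?_⟩
    have hconst : ∀ i : Fin (p ^ (s - 1)),
        ω ^ ((Psi z i).val * p ^ (s - 1)) = ω ^ (f * p ^ (s - 1)) := by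
      intro i
      rw [hPsieq i, ZMod.val_natCast, Nat.mod_eq_of_lt hf]
    rw [Finset.sum_congr rfl fun i _ => hconst i, Finset.sum_const, Finset.card_univ,
      Fintype.card_fin, nsmul_eq_mul]
    push_cast
    ring
end

section
/- Let G be a finite group, U = ⟨ζ_k⟩ the group of k-th roots of unity, and A = (a_{g,h})_{g,h∈G} a G-invariant matrix with entries in U, i.e., a_{gk,hk} = a_{g,h} for all g,h,k ∈ G. Then the map ψ : G×G → U defined by ψ(g,h) = a_{g,1}^{−1}·a_{g,h^{−1}}·a_{1,h^{−1}}^{−1} is a cocycle, i.e., ψ(g,h)ψ(gh,ℓ) = ψ(g,hℓ)ψ(h,ℓ) for all g,h,ℓ ∈ G. -/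
/-- Let `G` be a finite group and `A = (a_{g,h})` a `G`-invariant matrix with
entries in the group `⟨ζ_k⟩` of `k`-th roots of unity. Then
`ψ(g,h) = a_{g,1}⁻¹ · a_{g,h⁻¹} · a_{1,h⁻¹}⁻¹` is a cocycle. -/
theorem group_invariant_gives_cocycle (G : Type*) [Group G] [Fintype G]
    (k : ℕ) (hk : 0 < k) (A : G → G → ℂ)
    (hroot : ∀ g h : G, (A g h) ^ k = 1)
    (hinv : ∀ g h x : G, A (g * x) (h * x) = A g h) :
    ∀ g h ℓ : G,
      ((A g 1)⁻¹ * A g h⁻¹ * (A 1 h⁻¹)⁻¹) *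
        ((A (g * h) 1)⁻¹ * A (g * h) ℓ⁻¹ * (A 1 ℓ⁻¹)⁻¹) =
      ((A g 1)⁻¹ * A g (h * ℓ)⁻¹ * (A 1 (h * ℓ)⁻¹)⁻¹) *
        ((A h 1)⁻¹ * A h ℓ⁻¹ * (A 1 ℓ⁻¹)⁻¹) := by
  have hne : ∀ g h : G, A g h ≠ 0 := by
    intro g h hz
    have := hroot g h
    rw [hz, zero_pow hk.ne'] at this
    exact zero_ne_one this
  have key : ∀ g h : G, A g h = A (g * h⁻¹) 1 := by
    intro g h
    rw [← hinv (g * h⁻¹) 1 h]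
    simp
  intro g h ℓ
  rw [key g h⁻¹, key (g * h) ℓ⁻¹, key g (h * ℓ)⁻¹, key h ℓ⁻¹, key 1 h⁻¹,
    key 1 ℓ⁻¹, key 1 (h * ℓ)⁻¹]
  simp only [inv_inv, one_mul, mul_assoc]
  field_simp
  linear_combination (A (g * (h * ℓ)) 1 * (A g 1)⁻¹ * (A h 1)⁻¹ * (A ℓ 1)⁻¹) *
      mul_inv_cancel₀ (hne (g * h) 1) -
    (A (g * (h * ℓ)) 1 * (A g 1)⁻¹ * (A h 1)⁻¹ * (A ℓ 1)⁻¹) *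
      mul_inv_cancel₀ (hne (h * ℓ) 1)
end

section
/- Let G be a finite group of order n and ψ : G×G → ⟨ζ_k⟩ a normalized cocycle. The matrix M_ψ = [ψ(g,h)]_{g,h∈G} satisfies M_ψ M_ψ* = n I_n (i.e., is a Butson Hadamard matrix BH(n,k)) if and only if ψ is orthogonal, i.e., for every g ≠ 1 in G, ∑_{h∈G} ψ(g,h) = 0. -/
/-!
Write `c = a b⁻¹`. The cocycle identity `ψ(c,b) ψ(a,h) = ψ(c,bh) ψ(b,h)` shows that the
`(a,b)` entry of `M_ψ M_ψ*`, namely `∑_h ψ(a,h) ψ(b,h)⁻¹`, equals `ψ(c,b)⁻¹ ∑_h ψ(c,h)`. So the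
off-diagonal entries vanish exactly when the row sums of the rows `c ≠ 1` do, and normalization
makes every diagonal entry `n`.
-/

open Matrix

section Cocyclic

variable {G K : Type*} [Group G] [Fintype G] [Field K] [Star K] {ψ : G → G → K}

theorem of_mul_conjTranspose_apply_of_cocycle (hunit : ∀ g h, star (ψ g h) * ψ g h = 1)
    (hcocycle : ∀ g h ℓ, ψ g h * ψ (g * h) ℓ = ψ g (h * ℓ) * ψ h ℓ) (a b : G) :
    (of ψ * (of ψ)ᴴ) a b = (ψ (a * b⁻¹) b)⁻¹ * ∑ h, ψ (a * b⁻¹) h := by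
  have hne : ∀ g h, ψ g h ≠ 0 := fun g h => right_ne_zero_of_mul_eq_one (hunit g h)
  set c := a * b⁻¹
  have hcb : c * b = a := inv_mul_cancel_right a b
  have hterm : ∀ h, ψ a h * star (ψ b h) = (ψ c b)⁻¹ * ψ c (b * h) := fun h => by
    rw [eq_inv_of_mul_eq_one_left (hunit b h), eq_inv_mul_iff_mul_eq₀ (hne c b),
      ← mul_assoc, ← hcb, hcocycle, mul_inv_cancel_right₀ (hne b h)]
  simp only [mul_apply, conjTranspose_apply, of_apply, hterm, ← Finset.mul_sum]
  congr 1
  exact Fintype.sum_equiv (Equiv.mulLeft b) _ _ fun _ => rfl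

variable [DecidableEq G]

theorem of_mul_conjTranspose_eq_card_smul_one_iff (hunit : ∀ g h, star (ψ g h) * ψ g h = 1)
    (hnorm : ∀ g, ψ g 1 = 1 ∧ ψ 1 g = 1)
    (hcocycle : ∀ g h ℓ, ψ g h * ψ (g * h) ℓ = ψ g (h * ℓ) * ψ h ℓ) :
    of ψ * (of ψ)ᴴ = (Fintype.card G : K) • (1 : Matrix G G K) ↔
      ∀ g, g ≠ 1 → ∑ h, ψ g h = 0 := by
  have hentry := of_mul_conjTranspose_apply_of_cocycle hunit hcocycle
  constructor
  · intro hBH g hg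
    simpa [hentry, (hnorm g).1, hg] using congr_fun₂ hBH g 1
  · intro horth
    ext a b
    rcases eq_or_ne a b with rfl | hab
    · simp [hentry, hnorm]
    · have hc : a * b⁻¹ ≠ 1 := mt mul_inv_eq_one.mp hab
      simp [hentry, horth _ hc, hab]

end Cocyclic

theorem Complex.star_mul_self_eq_one_of_pow_eq_one {z : ℂ} {k : ℕ} (hz : z ^ k = 1)
    (hk : k ≠ 0) : star z * z = 1 := by
  rw [Complex.star_def, Complex.conj_mul', Complex.norm_eq_one_of_pow_eq_one hz hk]
  norm_num

/-- Let `G` be a finite group of order `n` and `ψ : G×G → ⟨ζ_k⟩` a normalized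
cocycle.  The cocyclic matrix `M_ψ = [ψ(g,h)]` satisfies `M_ψ M_ψ* = n·I`
(i.e. is a `BH(n,k)`) iff `ψ` is orthogonal: `∑_h ψ(g,h) = 0` for all
`g ≠ 1`. -/
theorem cocyclic_butson_iff_orthogonal (G : Type*) [Group G] [Fintype G]
    [DecidableEq G] (k : ℕ) (hk : 0 < k) (ψ : G → G → ℂ)
    (hroot : ∀ g h : G, ψ g h ^ k = 1)
    (hnorm : ∀ g : G, ψ g 1 = 1 ∧ ψ 1 g = 1)
    (hcocycle : ∀ g h ℓ : G, ψ g h * ψ (g * h) ℓ = ψ g (h * ℓ) * ψ h ℓ) :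
    (Matrix.of ψ) * (Matrix.of ψ).conjTranspose =
        (Fintype.card G : ℂ) • (1 : Matrix G G ℂ) ↔
      ∀ g : G, g ≠ 1 → ∑ h : G, ψ g h = 0 :=
  of_mul_conjTranspose_eq_card_smul_one_iff
    (fun g h => Complex.star_mul_self_eq_one_of_pow_eq_one (hroot g h) hk.ne') hnorm hcocycle
end

section
/- Let G = {g_1 = 1, g_2, ..., g_n} be a finite group and ψ : G×G → ⟨ζ_k⟩ a cocycle. For g, h ∈ G, λ, μ ∈ ℤ_k, let x = ζ_k^λ·[ψ(g,g_1),...,ψ(g,g_n)] and y = ζ_k^μ·[ψ(h,g_1),...,ψ(h,g_n)], and define π_x ∈ S_n by π_x^{−1}(j) = r where g_r = g·g_j. Then the componentwise product of x with π_x applied to y equals ζ_k^{λ+μ}·ψ(h,g)·[ψ(hg,g_1),...,ψ(hg,g_n)]. -/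
/-- Let `G = {g_1 = 1, …, g_n}` be a finite group, `ψ : G×G → ⟨ζ_k⟩` a
cocycle, `x = ζ^λ·[ψ(g,g_1),…,ψ(g,g_n)]`, `y = ζ^μ·[ψ(h,g_1),…,ψ(h,g_n)]`,
and `π_x` the permutation with `π_x⁻¹(j) = r` where `g_r = g·g_j`.  Then the
componentwise product `x + π_x(y)` (written multiplicatively) equals
`ζ^{λ+μ}·ψ(h,g)·[ψ(hg,g_1),…,ψ(hg,g_n)]`. -/
theorem cocycle_row_product (G : Type*) [Group G] [Fintype G]
    (n k : ℕ) (e : Fin n ≃ G) (he : ∀ h0 : 0 < n, e ⟨0, h0⟩ = 1)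
    (ζ : ℂ) (hζ : ζ ^ k = 1) (ψ : G → G → ℂ)
    (hcocycle : ∀ a b c : G, ψ a b * ψ (a * b) c = ψ a (b * c) * ψ b c)
    (g h : G) (lam mu : ℕ)
    (x y : Fin n → ℂ)
    (hx : ∀ j, x j = ζ ^ lam * ψ g (e j))
    (hy : ∀ j, y j = ζ ^ mu * ψ h (e j))
    (π : Equiv.Perm (Fin n)) (hπ : ∀ j, π⁻¹ j = e.symm (g * e j)) :
    ∀ j, x j * y (π⁻¹ j) = ζ ^ (lam + mu) * ψ h g * ψ (h * g) (e j) := by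
  intro j
  have hc := hcocycle h g (e j)
  rw [hx, hy, hπ, Equiv.apply_symm_apply, pow_add]
  linear_combination (-(ζ^lam * ζ^mu)) * hc
end

section
/- Let m be odd, and define Ψ : ℤ_{4m} → (ℤ_{2m})^2 by Ψ(4a + mb) = [2a, 2a] + m·Φ(b) for 0 ≤ a ≤ m−1 and 0 ≤ b ≤ 3, where Φ(0)=[0,0], Φ(1)=[0,1], Φ(2)=[1,1], Φ(3)=[1,0]. For each x ∈ ℤ_{4m} let ρ_x ∈ S_2 be the transposition (1,2) if x is odd and identity if x is even. Then for all x, y ∈ ℤ_{4m}: Ψ(x) + ρ_x(Ψ(y)) = Ψ(x+y) (componentwise addition in ℤ_{2m}). -/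
lemma psi2_rep (m : ℕ) (hm : Odd m) [NeZero (4*m)] (x : ZMod (4*m)) :
    ∃ a b : ℕ, a < m ∧ b < 4 ∧ x = ((4*a + m*b : ℕ) : ZMod (4*m)) ∧ (Odd x.val ↔ Odd b) := by
  have hm0 : 0 < m := hm.pos
  set n := x.val with hn
  set b := n * m % 4 with hbdef
  have hb4 : b < 4 := Nat.mod_lt _ (by norm_num)
  have hmm : m * m % 4 = 1 := by
    obtain ⟨k, hk⟩ := hm
    have : m * m = 4 * (k*k+k) + 1 := by subst hk; ring
    omega
  have hmb : m * b % 4 = n % 4 := by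
    have h1 : m * b ≡ m * (n * m) [MOD 4] := Nat.ModEq.mul_left m (Nat.mod_modEq (n*m) 4)
    have h2 : n * (m * m) ≡ n * 1 [MOD 4] := Nat.ModEq.mul_left n (by
      show m * m % 4 = 1 % 4
      omega)
    have h3 : m * (n * m) = n * (m * m) := by ring
    calc m * b % 4 = m * (n*m) % 4 := h1
      _ = n * (m*m) % 4 := by rw [h3]
      _ = (n * 1) % 4 := h2
      _ = n % 4 := by rw [Nat.mul_one]
  set t := n + 4*m - m*b with htdef
  have hble : m * b ≤ 3 * m := by
    have : b ≤ 3 := by omega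
    calc m * b ≤ m * 3 := Nat.mul_le_mul_left m this
      _ = 3 * m := by ring
  have h4 : 4 ∣ t := by
    have hmb' := hmb
    set mb := m * b with hmbd
    omega
  refine ⟨t / 4 % m, b, Nat.mod_lt _ hm0, hb4, ?_, ?_⟩
  · have hcast : ((n : ℕ) : ZMod (4*m)) = x := by
      rw [hn]; simp [ZMod.natCast_val, ZMod.cast_id]
    symm
    rw [← hcast, ZMod.natCast_eq_natCast_iff]
    have h5 : 4 * (t / 4 % m) ≡ 4 * (t / 4) [MOD 4*m] :=
      Nat.ModEq.mul_left' 4 (Nat.mod_modEq _ m)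
    have h6 : 4 * (t / 4) = t := Nat.mul_div_cancel' h4
    have h7 := h5.add_right (m * b)
    have h8 : t + m * b = n + 4*m := by
      set mb := m * b with hmbd
      omega
    rw [h6, h8] at h7
    have h9 : (n + 4*m) ≡ n [MOD 4*m] := by
      show (n + 4*m) % (4*m) = n % (4*m)
      exact Nat.add_mod_right n (4*m)
    exact h7.trans h9
  · have hb2 : b % 2 = n % 2 := by
      have : n * m % 2 = n % 2 := by
        rw [Nat.mul_mod, Nat.odd_iff.mp hm]
        simp [Nat.mod_mod]
      have hbb : b % 2 = n * m % 2 := by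
        rw [hbdef, Nat.mod_mod_of_dvd _ (by norm_num)]
      omega
    rw [Nat.odd_iff, Nat.odd_iff, hb2]

lemma psi2_key (m a a' c1 c2 c3 : ℕ) (h : (c1 + c2) % 2 = c3 % 2) :
    ((2 * ((a + a') % m) + m * c3 : ℕ) : ZMod (2*m)) =
      ((2 * a + m * c1 : ℕ) : ZMod (2*m)) + ((2 * a' + m * c2 : ℕ) : ZMod (2*m)) := by
  rw [← Nat.cast_add, ZMod.natCast_eq_natCast_iff]
  have h1 : 2 * ((a + a') % m) ≡ 2 * (a + a') [MOD 2*m] :=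
    Nat.ModEq.mul_left' 2 (Nat.mod_modEq _ m)
  have h2 : m * c3 ≡ m * (c1 + c2) [MOD 2*m] := by
    have := Nat.ModEq.mul_left' m (show c3 ≡ c1 + c2 [MOD 2] from h.symm)
    rwa [mul_comm m 2] at this
  have h3 := h1.add h2
  have he : 2*(a+a') + m*(c1+c2) = (2*a + m*c1) + (2*a' + m*c2) := by ring
  rwa [he] at h3

/-- Let `m` be odd and `Ψ : ℤ_{4m} → (ℤ_{2m})²` be given by
`Ψ(4a + mb) = [2a,2a] + m·Φ(b)` with `Φ(0)=[0,0]`, `Φ(1)=[0,1]`,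
`Φ(2)=[1,1]`, `Φ(3)=[1,0]`.  With `ρ_x` the swap of the two coordinates when
`x` is odd (identity otherwise), `Ψ(x) + ρ_x(Ψ(y)) = Ψ(x+y)` for all
`x, y ∈ ℤ_{4m}`. -/
theorem psi2_propelinear (m : ℕ) (hm : Odd m)
    (Psi : ZMod (4 * m) → ZMod (2 * m) × ZMod (2 * m))
    (hPsi : ∀ a b : ℕ, a < m → b < 4 →
      Psi ((4 * a + m * b : ℕ) : ZMod (4 * m)) =
        (((2 * a + m * (b / 2) : ℕ) : ZMod (2 * m)),
         ((2 * a + m * (if b = 0 ∨ b = 3 then 0 else 1) : ℕ) : ZMod (2 * m)))) :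
    ∀ x y : ZMod (4 * m),
      Psi (x + y) =
        ((Psi x).1 + (if Odd x.val then (Psi y).2 else (Psi y).1),
         (Psi x).2 + (if Odd x.val then (Psi y).1 else (Psi y).2)) := by
  intro x y
  haveI : NeZero (4*m) := ⟨by have := hm.pos; positivity⟩
  obtain ⟨a, b, ha, hb, hx, hpar⟩ := psi2_rep m hm x
  obtain ⟨a', b', ha', hb', hy, -⟩ := psi2_rep m hm y
  have hPx := hPsi a b ha hb
  rw [← hx] at hPx
  have hPy := hPsi a' b' ha' hb'
  rw [← hy] at hPy
  have hsum : x + y = ((4*((a+a')%m) + m*((b+b')%4) : ℕ) : ZMod (4*m)) := by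
    rw [hx, hy, ← Nat.cast_add, ZMod.natCast_eq_natCast_iff]
    have h1 : 4 * ((a+a') % m) ≡ 4 * (a+a') [MOD 4*m] :=
      Nat.ModEq.mul_left' 4 (Nat.mod_modEq _ m)
    have h2 : m * ((b+b') % 4) ≡ m * (b+b') [MOD 4*m] := by
      have := Nat.ModEq.mul_left' m (Nat.mod_modEq (b+b') 4)
      rwa [mul_comm m 4] at this
    have h3 := h1.add h2
    have he : 4*(a+a') + m*(b+b') = (4*a + m*b) + (4*a' + m*b') := by ring
    rw [he] at h3
    exact h3.symm
  have hPs := hPsi ((a+a')%m) ((b+b')%4) (Nat.mod_lt _ hm.pos) (Nat.mod_lt _ (by norm_num))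
  rw [hsum, hPs, hPx, hPy]
  simp only [hpar]
  clear hPx hPy hPs hsum hx hy hpar ha ha'
  interval_cases b <;> interval_cases b' <;>
  · refine Prod.ext ?_ ?_ <;>
    simp only [Prod.fst, Prod.snd] <;>
    first
      | (rw [if_pos (by decide)]; exact psi2_key m a a' _ _ _ (by decide))
      | (rw [if_neg (by decide)]; exact psi2_key m a a' _ _ _ (by decide))
end

section
/- Let p be a prime not dividing m, s ≥ 2, and let C ⊆ (ℤ_{mp^s})^n be a code with minimum Hamming distance d. Then the minimum Hamming distance d' of Ψ_p(C) ⊆ (ℤ_{mp})^{n·p^{s-1}} satisfies d·(p−1)·p^{s−2} ≤ d' ≤ d·p^{s−1}. -/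
/-! At a position `w`, the Gray images of `x ≠ y` agree exactly when the base-`p` digit vector
of `w` solves an affine equation over `ℤ_p` in `s - 1` unknowns that is not `0 = 0`; such an
equation has at most `p^(s-2)` solutions, so `d_H(Φ x, Φ y) ≥ p^(s-1) - p^(s-2)`. By the Chinese
remainder theorem every element of `ℤ_{mp^s}` is `a·p^s + b·m` with `a < m`, `b < p^s`, and an
entry `m·v + a·p` of `Ψ_p` determines `(v, a)`: if the `a`-parts of `x, y` agree, `Ψ_p` has the
distance of `Φ` on the `b`-parts, otherwise every coordinate differs. Summing over the differing
coordinates of two codewords gives the bounds. -/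

open Finset

section AffineEquation

variable {K ι : Type*} [Field K] [Fintype K] [DecidableEq K] [Fintype ι] [DecidableEq ι]

theorem card_filter_sum_mul_eq_le (c : ι → K) (t : K) (h : c ≠ 0 ∨ t ≠ 0) :
    #{v : ι → K | ∑ j, c j * v j = t} ≤ Fintype.card K ^ (Fintype.card ι - 1) := by
  by_cases hc : c = 0
  · have ht : t ≠ 0 := h.resolve_left (not_not.mpr hc)
    simp [hc, Ne.symm ht]
  obtain ⟨j₀, hj₀⟩ := Function.ne_iff.mp hc
  calc #{v : ι → K | ∑ j, c j * v j = t}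
      ≤ #(univ : Finset ({j // j ≠ j₀} → K)) := by
        refine card_le_card_of_injOn (fun v j => v j) (fun _ _ => mem_coe.mpr (mem_univ _)) ?_
        intro v hv v' hv' hvv'
        simp only [mem_coe, mem_filter, mem_univ, true_and] at hv hv'
        have hoff : ∀ j, j ≠ j₀ → v j = v' j := fun j hj => congrFun hvv' ⟨j, hj⟩
        have hsum : ∑ j, c j * (v j - v' j) = c j₀ * (v j₀ - v' j₀) :=
          Fintype.sum_eq_single j₀ fun j hj => by rw [hoff j hj, sub_self, mul_zero]
        have hon : v j₀ = v' j₀ := by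
          have : c j₀ * (v j₀ - v' j₀) = 0 := by
            rw [← hsum]; simp only [mul_sub, sum_sub_distrib, hv, hv', sub_self]
          exact sub_eq_zero.mp ((mul_eq_zero.mp this).resolve_left hj₀)
        funext j
        by_cases hj : j = j₀
        · exact hj ▸ hon
        · exact hoff j hj
    _ = Fintype.card K ^ (Fintype.card ι - 1) := by
        simp [Fintype.card_subtype_compl]

end AffineEquation

section Flatten

variable {ι κ α β : Type*} [Fintype ι] [Fintype κ] [DecidableEq β]

theorem hammingDist_flatten (Φ : α → κ → β) (x y : ι → α) :
    hammingDist (fun ji : ι × κ => Φ (x ji.1) ji.2) (fun ji : ι × κ => Φ (y ji.1) ji.2) =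
      ∑ i, hammingDist (Φ (x i)) (Φ (y i)) := by
  simp only [hammingDist, card_filter, Fintype.sum_prod_type]

theorem hammingDist_mul_le_sum_and_sum_le [DecidableEq α] {f : ι → ℕ} {x y : ι → α}
    {L U : ℕ} (h : ∀ i, x i ≠ y i → L ≤ f i ∧ f i ≤ U) (h0 : ∀ i, x i = y i → f i = 0) :
    hammingDist x y * L ≤ ∑ i, f i ∧ ∑ i, f i ≤ hammingDist x y * U := by
  simp only [hammingDist, card_filter, sum_mul, ite_mul, one_mul, zero_mul]
  constructor <;> refine sum_le_sum fun i _ => ?_ <;> split_ifs with hi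
  exacts [(h i hi).1, Nat.zero_le _, (h i hi).2, (h0 i (not_not.mp hi)).le]

theorem hammingDist_flatten_le [DecidableEq α] (Φ : α → κ → β) (x y : ι → α) :
    hammingDist (fun ji : ι × κ => Φ (x ji.1) ji.2) (fun ji : ι × κ => Φ (y ji.1) ji.2) ≤
      hammingDist x y * Fintype.card κ := by
  rw [hammingDist_flatten]
  exact (hammingDist_mul_le_sum_and_sum_le (L := 0)
    (fun _ _ => ⟨Nat.zero_le _, hammingDist_le_card_fintype⟩)
    fun i hi => by rw [hi, hammingDist_self]).2

theorem mul_le_hammingDist_flatten [DecidableEq α] {Φ : α → κ → β} {L : ℕ}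
    (hΦ : ∀ a b, a ≠ b → L ≤ hammingDist (Φ a) (Φ b)) (x y : ι → α) :
    hammingDist x y * L ≤ hammingDist (fun ji : ι × κ => Φ (x ji.1) ji.2)
      (fun ji : ι × κ => Φ (y ji.1) ji.2) := by
  rw [hammingDist_flatten]
  exact (hammingDist_mul_le_sum_and_sum_le
    (fun i hi => ⟨hΦ _ _ hi, hammingDist_le_card_fintype⟩)
    fun i hi => by rw [hi, hammingDist_self]).1

end Flatten

section CRT

variable {m n : ℕ}

theorem eq_left_of_natCast_mul_add_mul_eq (hmn : m.Coprime n) {a a' b b' : ℕ}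
    (ha : a < m) (ha' : a' < m)
    (h : ((a * n + b * m : ℕ) : ZMod (m * n)) = ((a' * n + b' * m : ℕ) : ZMod (m * n))) :
    a = a' := by
  have hmod : a * n ≡ a' * n [MOD m] := by
    have := ((ZMod.natCast_eq_natCast_iff _ _ _).mp h).of_mul_right n
    simpa [Nat.ModEq, Nat.add_mul_mod_self_right] using this
  exact (Nat.ModEq.cancel_right_of_coprime hmn hmod).eq_of_lt_of_lt ha ha'

theorem eq_and_eq_of_natCast_mul_add_mul_eq (hmn : m.Coprime n) {a a' b b' : ℕ}
    (ha : a < m) (ha' : a' < m) (hb : b < n) (hb' : b' < n)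
    (h : ((a * n + b * m : ℕ) : ZMod (m * n)) = ((a' * n + b' * m : ℕ) : ZMod (m * n))) :
    a = a' ∧ b = b' := by
  refine ⟨eq_left_of_natCast_mul_add_mul_eq hmn ha ha' h,
    eq_left_of_natCast_mul_add_mul_eq hmn.symm (b := a) (b' := a') hb hb' ?_⟩
  rwa [mul_comm n m, add_comm (b * m), add_comm (b' * m)]

theorem exists_natCast_mul_add_mul_eq [NeZero m] [NeZero n] (hmn : m.Coprime n)
    (x : ZMod (m * n)) :
    ∃ a < m, ∃ b < n, ((a * n + b * m : ℕ) : ZMod (m * n)) = x := by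
  let f : Fin m × Fin n → ZMod (m * n) := fun ab => ((ab.1 * n + ab.2 * m : ℕ) : ZMod (m * n))
  have hf : f.Bijective := by
    refine (Fintype.bijective_iff_injective_and_card f).mpr ⟨?_, by simp⟩
    rintro ⟨a, b⟩ ⟨a', b'⟩ h
    obtain ⟨haa, hbb⟩ := eq_and_eq_of_natCast_mul_add_mul_eq hmn a.isLt a'.isLt b.isLt b'.isLt h
    exact Prod.ext (Fin.ext haa) (Fin.ext hbb)
  obtain ⟨⟨a, b⟩, hab⟩ := hf.2 x
  exact ⟨a, a.isLt, b, b.isLt, hab⟩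

end CRT

theorem digitZ_injOn (p k : ℕ) [NeZero p] :
    Set.InjOn (fun b (j : Fin k) => digitZ p b j) (Set.Iio (p ^ k)) := by
  intro b hb b' hb' h
  have hdigit : ∀ j : Fin k, b / p ^ (j : ℕ) % p = b' / p ^ (j : ℕ) % p := fun j => by
    simpa [digitZ, ZMod.natCast_eq_natCast_iff'] using congrFun h j
  have := finFunctionFinEquiv.symm.injective (a₁ := ⟨b, hb⟩) (a₂ := ⟨b', hb'⟩)
    (funext fun j => Fin.ext (by simp [finFunctionFinEquiv_symm_apply_val, hdigit j]))
  exact congrArg Fin.val this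

section GrayMap

variable {p s : ℕ}

theorem grayMap_eq_grayMap_iff (x y : ZMod (p ^ s)) (i : Fin (p ^ (s - 1))) :
    grayMap p s x i = grayMap p s y i ↔
      ∑ j : Fin (s - 1), (digitZ p (x.val % p ^ (s - 1)) j - digitZ p (y.val % p ^ (s - 1)) j) *
          digitZ p i j =
        ((y.val / p ^ (s - 1) : ℕ) : ZMod p) - ((x.val / p ^ (s - 1) : ℕ) : ZMod p) := by
  simp only [grayMap, LDrow, ← Fin.sum_univ_eq_sum_range (fun j => digitZ p _ j * digitZ p _ j),
    sub_mul, sum_sub_distrib]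
  constructor <;> intro h <;> linear_combination h

theorem card_grayMap_agree_le [Fact p.Prime] {x y : ZMod (p ^ s)} (hxy : x ≠ y) :
    #{i | grayMap p s x i = grayMap p s y i} ≤ p ^ (s - 2) := by
  set k := s - 1
  set c : Fin k → ZMod p := fun j => digitZ p (x.val % p ^ k) j - digitZ p (y.val % p ^ k) j
  set t : ZMod p := ((y.val / p ^ k : ℕ) : ZMod p) - ((x.val / p ^ k : ℕ) : ZMod p)
  have hct : c ≠ 0 ∨ t ≠ 0 := by
    by_contra! h
    obtain ⟨hc, ht⟩ := h
    have hlo : x.val % p ^ k = y.val % p ^ k :=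
      digitZ_injOn p k (Nat.mod_lt _ (NeZero.pos _)) (Nat.mod_lt _ (NeZero.pos _))
        (funext fun j => sub_eq_zero.mp (congrFun hc j))
    have hhi_lt (z : ZMod (p ^ s)) : z.val / p ^ k < p := by
      refine Nat.div_lt_of_lt_mul (z.val_lt.trans_le ?_)
      rw [← pow_succ]
      exact Nat.pow_le_pow_right (NeZero.pos p) (by omega)
    have hhi : x.val / p ^ k = y.val / p ^ k := by
      rw [← ZMod.val_cast_of_lt (hhi_lt x), ← ZMod.val_cast_of_lt (hhi_lt y), sub_eq_zero.mp ht]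
    refine hxy (ZMod.val_injective _ ?_)
    rw [← Nat.div_add_mod x.val (p ^ k), ← Nat.div_add_mod y.val (p ^ k), hlo, hhi]
  calc #{i | grayMap p s x i = grayMap p s y i}
      ≤ #{v : Fin k → ZMod p | ∑ j, c j * v j = t} := by
        refine card_le_card_of_injOn (fun i j => digitZ p i j) (fun i hi => ?_) ?_
        · simp only [mem_coe, mem_filter, mem_univ, true_and] at hi ⊢
          exact (grayMap_eq_grayMap_iff x y i).mp hi
        · intro i _ i' _ h
          exact Fin.ext (digitZ_injOn p k i.isLt i'.isLt h)
    _ ≤ p ^ (k - 1) := by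
        simpa using card_filter_sum_mul_eq_le c t hct
    _ = p ^ (s - 2) := by congr 1

theorem le_hammingDist_grayMap [Fact p.Prime] {x y : ZMod (p ^ s)} (hxy : x ≠ y) :
    p ^ (s - 1) - p ^ (s - 2) ≤ hammingDist (grayMap p s x) (grayMap p s y) := by
  have hsplit := card_filter_add_card_filter_not
    (s := univ) (fun i => grayMap p s x i = grayMap p s y i)
  have := card_grayMap_agree_le hxy
  simp only [card_univ, Fintype.card_fin] at hsplit
  simp only [hammingDist, ne_eq]
  omega

end GrayMap

theorem le_hammingDist_psi {p s m : ℕ} [Fact p.Prime] (hpm : ¬ p ∣ m)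
    (Psi : ZMod (m * p ^ s) → Fin (p ^ (s - 1)) → ZMod (m * p))
    (hPsi : ∀ a b : ℕ, a < m → b < p ^ s → ∀ i,
      Psi ((a * p ^ s + b * m : ℕ) : ZMod (m * p ^ s)) i =
        ((m * (grayMap p s ((b : ℕ) : ZMod (p ^ s)) i).val + a * p : ℕ) : ZMod (m * p)))
    {x y : ZMod (m * p ^ s)} (hxy : x ≠ y) :
    p ^ (s - 1) - p ^ (s - 2) ≤ hammingDist (Psi x) (Psi y) := by
  have : NeZero m := ⟨by rintro rfl; exact hpm (dvd_zero p)⟩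
  have hcop : m.Coprime p :=
    Nat.coprime_comm.mp ((Nat.Prime.coprime_iff_not_dvd Fact.out).mpr hpm)
  have hPsi' (a b : ℕ) (ha : a < m) (hb : b < p ^ s) (i) :
      Psi ((a * p ^ s + b * m : ℕ) : ZMod (m * p ^ s)) i =
        ((a * p + (grayMap p s b i).val * m : ℕ) : ZMod (m * p)) := by
    rw [hPsi a b ha hb i, add_comm, mul_comm m (grayMap p s b i).val]
  obtain ⟨a, ha, b, hb, rfl⟩ := exists_natCast_mul_add_mul_eq (hcop.pow_right s) x
  obtain ⟨a', ha', b', hb', rfl⟩ := exists_natCast_mul_add_mul_eq (hcop.pow_right s) y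
  by_cases haa : a = a'
  · subst haa
    have hbb : (b : ZMod (p ^ s)) ≠ b' := fun h => hxy (by
      rw [← ZMod.val_cast_of_lt hb, ← ZMod.val_cast_of_lt hb', h])
    have hinj (_ : Fin (p ^ (s - 1))) :
        Function.Injective fun v : ZMod p => ((a * p + v.val * m : ℕ) : ZMod (m * p)) :=
      fun v v' h => ZMod.val_injective _
        (eq_and_eq_of_natCast_mul_add_mul_eq hcop ha ha (ZMod.val_lt v) (ZMod.val_lt v') h).2
    calc p ^ (s - 1) - p ^ (s - 2) ≤ hammingDist (grayMap p s b) (grayMap p s b') :=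
          le_hammingDist_grayMap hbb
      _ = hammingDist (Psi _) (Psi _) := by
          rw [← hammingDist_comp _ hinj]
          congr 1 <;> funext i
          exacts [(hPsi' a b ha hb i).symm, (hPsi' a b' ha hb' i).symm]
  · have hne (i) : Psi (a * p ^ s + b * m : ℕ) i ≠ Psi (a' * p ^ s + b' * m : ℕ) i :=
      fun h => haa <| eq_left_of_natCast_mul_add_mul_eq hcop ha ha' <| by
        rwa [hPsi' a b ha hb, hPsi' a' b' ha' hb'] at h
    calc p ^ (s - 1) - p ^ (s - 2) ≤ p ^ (s - 1) := Nat.sub_le _ _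
      _ = hammingDist (Psi _) (Psi _) := by
          rw [hammingDist, filter_true_of_mem fun i _ => hne i, card_univ, Fintype.card_fin]

theorem psi_min_distance_bounds_general (p s m n : ℕ) (hp : p.Prime) (hs : 2 ≤ s)
    (hpm : ¬ p ∣ m)
    (Psi : ZMod (m * p ^ s) → Fin (p ^ (s - 1)) → ZMod (m * p))
    (hPsi : ∀ a b : ℕ, a < m → b < p ^ s → ∀ i,
      Psi ((a * p ^ s + b * m : ℕ) : ZMod (m * p ^ s)) i =
        ((m * (grayMap p s ((b : ℕ) : ZMod (p ^ s)) i).val + a * p : ℕ) : ZMod (m * p)))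
    (C : Set (Fin n → ZMod (m * p ^ s))) (d d' : ℕ)
    (hd_le : ∀ x ∈ C, ∀ y ∈ C, x ≠ y → d ≤ hammingDist x y)
    (hd_eq : ∃ x ∈ C, ∃ y ∈ C, x ≠ y ∧ hammingDist x y = d)
    (hd'_le : ∀ x ∈ C, ∀ y ∈ C, x ≠ y →
      d' ≤ hammingDist (fun ji : Fin n × Fin (p ^ (s - 1)) => Psi (x ji.1) ji.2)
        (fun ji : Fin n × Fin (p ^ (s - 1)) => Psi (y ji.1) ji.2))
    (hd'_eq : ∃ x ∈ C, ∃ y ∈ C, x ≠ y ∧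
      hammingDist (fun ji : Fin n × Fin (p ^ (s - 1)) => Psi (x ji.1) ji.2)
        (fun ji : Fin n × Fin (p ^ (s - 1)) => Psi (y ji.1) ji.2) = d') :
    d * (p - 1) * p ^ (s - 2) ≤ d' ∧ d' ≤ d * p ^ (s - 1) := by
  have : Fact p.Prime := ⟨hp⟩
  have hL : (p - 1) * p ^ (s - 2) = p ^ (s - 1) - p ^ (s - 2) := by
    rw [Nat.sub_one_mul, ← pow_succ']
    congr 2
    omega
  constructor
  · obtain ⟨x, hx, y, hy, hxy, rfl⟩ := hd'_eq
    calc d * (p - 1) * p ^ (s - 2) = d * (p ^ (s - 1) - p ^ (s - 2)) := by rw [mul_assoc, hL]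
      _ ≤ hammingDist x y * (p ^ (s - 1) - p ^ (s - 2)) :=
          Nat.mul_le_mul_right _ (hd_le x hx y hy hxy)
      _ ≤ _ := mul_le_hammingDist_flatten
          (fun _ _ h => le_hammingDist_psi hpm Psi hPsi h) x y
  · obtain ⟨x, hx, y, hy, hxy, rfl⟩ := hd_eq
    simpa using (hd'_le x hx y hy hxy).trans (hammingDist_flatten_le Psi x y)

/-- Let `C ⊆ (ℤ_{mp^s})^n` (`p` prime, `p ∤ m`) be a code with minimum
Hamming distance `d`.  Then the minimum Hamming distance `d'` of the image
code `Ψ_p(C) ⊆ (ℤ_{mp})^{n·p^{s-1}}` (entrywise application of `Ψ_p`)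
satisfies `d·(p−1)·p^{s−2} ≤ d' ≤ d·p^{s−1}`. -/
theorem psi_min_distance_bounds (p s m n : ℕ) (hp : p.Prime) (hs : 2 ≤ s)
    (hm : 0 < m) (hpm : ¬ p ∣ m)
    (Psi : ZMod (m * p ^ s) → Fin (p ^ (s - 1)) → ZMod (m * p))
    (hPsi : ∀ a b : ℕ, a < m → b < p ^ s → ∀ i,
      Psi ((a * p ^ s + b * m : ℕ) : ZMod (m * p ^ s)) i =
        ((m * (grayMap p s ((b : ℕ) : ZMod (p ^ s)) i).val + a * p : ℕ) : ZMod (m * p)))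
    (C : Set (Fin n → ZMod (m * p ^ s))) (d d' : ℕ)
    (hd_le : ∀ x ∈ C, ∀ y ∈ C, x ≠ y → d ≤ hammingDist x y)
    (hd_eq : ∃ x ∈ C, ∃ y ∈ C, x ≠ y ∧ hammingDist x y = d)
    (hd'_le : ∀ x ∈ C, ∀ y ∈ C, x ≠ y →
      d' ≤ hammingDist (fun ji : Fin n × Fin (p ^ (s - 1)) => Psi (x ji.1) ji.2)
        (fun ji : Fin n × Fin (p ^ (s - 1)) => Psi (y ji.1) ji.2))
    (hd'_eq : ∃ x ∈ C, ∃ y ∈ C, x ≠ y ∧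
      hammingDist (fun ji : Fin n × Fin (p ^ (s - 1)) => Psi (x ji.1) ji.2)
        (fun ji : Fin n × Fin (p ^ (s - 1)) => Psi (y ji.1) ji.2) = d') :
    d * (p - 1) * p ^ (s - 2) ≤ d' ∧ d' ≤ d * p ^ (s - 1) :=
  psi_min_distance_bounds_general p s m n hp hs hpm Psi hPsi C d d' hd_le hd_eq hd'_le hd'_eq
end
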